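/- arXiv:2601.10249 — 2 statements merged into one kernel-verified Lean document; each statement's English description precedes it below -/
import Mathlib

section
/- Eventual positivity of H_r (Claim 'Positivity of H_r'): Fix an integer Δ ≥ 3. There exists θ > 0 such that H_r(t) > 0 for every r ∈ R_Δ and every t ≥ θ. -/
open Real MeasureTheory Filter

noncomputable section

/-- Tail sums: `s_k = Σ_{d=k}^Δ r_d` (also used as `q_k` for distributions `p`). -/
def tailS (Δ : ℕ) (r : ℕ → ℝ) (k : ℕ) : ℝ := ∑ d ∈ Finset.Icc k Δ, r d

/-- Membership in the set `R_Δ`: `r_2 = -1`, `r_k ≥ 0` for `3 ≤ k ≤ Δ`, `r_k = 0` for `k > Δ`,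
and `Σ_{k=3}^Δ r_k = 1`. -/
def memR (Δ : ℕ) (r : ℕ → ℝ) : Prop :=
  r 2 = -1 ∧ (∀ k, 3 ≤ k → k ≤ Δ → 0 ≤ r k) ∧ (∀ k, Δ < k → r k = 0) ∧
    (∑ k ∈ Finset.Icc 3 Δ, r k) = 1

/-- The Molloy–Reed constant `Υ_r = Σ_{k=3}^Δ k(k-2) r_k`. -/
def Upsilon (Δ : ℕ) (r : ℕ → ℝ) : ℝ := ∑ k ∈ Finset.Icc 3 Δ, (k : ℝ) * ((k : ℝ) - 2) * r k

/-- `Λ_r(t) = λ'(t) · ∫_0^{λ(t)} e^x/(1+x)² · (Σ_{k=2}^{Δ-1} x^k/k! · s_{k+1}) dx`. -/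
def LamErr (lam : ℝ → ℝ) (Δ : ℕ) (r : ℕ → ℝ) (t : ℝ) : ℝ :=
  deriv lam t * ∫ x in (0:ℝ)..(lam t),
    Real.exp x / (1 + x) ^ 2 *
      ∑ k ∈ Finset.Icc 2 (Δ - 1), x ^ k / (Nat.factorial k : ℝ) * tailS Δ r (k + 1)

/-- `H_r(t) = e^{-λ(t)} (Λ_r'(t) - λ'(t)Λ_r(t) + λ'(t) Σ_{k=0}^{Δ-2} λ(t)^k/k! · r_{k+2})`. -/
def Herr (lam : ℝ → ℝ) (Δ : ℕ) (r : ℕ → ℝ) (t : ℝ) : ℝ :=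
  Real.exp (-lam t) *
    (deriv (LamErr lam Δ r) t - deriv lam t * LamErr lam Δ r t +
      deriv lam t * ∑ k ∈ Finset.range (Δ - 1), lam t ^ k / (Nat.factorial k : ℝ) * r (k + 2))

/-- `I_r(t) = e^{-λ(t)} ( -Λ_r(t) + Σ_{k=1}^{Δ-2} λ(t)^k/k! · s_{k+2})`. -/
def Ierr (lam : ℝ → ℝ) (Δ : ℕ) (r : ℕ → ℝ) (t : ℝ) : ℝ :=
  Real.exp (-lam t) *
    (-LamErr lam Δ r t +
      ∑ k ∈ Finset.Icc 1 (Δ - 2), lam t ^ k / (Nat.factorial k : ℝ) * tailS Δ r (k + 2))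

/-- `u(t) = 1 + λ(t) ∫_0^t (λ'(s)-1)/λ(s)² ds`. -/
def uAux (lam : ℝ → ℝ) (t : ℝ) : ℝ :=
  1 + lam t * ∫ s in (0:ℝ)..t, (deriv lam s - 1) / (lam s) ^ 2

/-- `α_r(t) = -∫_0^t u(s) H_r(s) λ(s) ds`. -/
def alphaAux (lam : ℝ → ℝ) (Δ : ℕ) (r : ℕ → ℝ) (t : ℝ) : ℝ :=
  -∫ s in (0:ℝ)..t, uAux lam s * Herr lam Δ r s * lam s

/-- `β_r(t) = ∫_0^t H_r(s) λ(s)² ds`. -/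
def betaAux (lam : ℝ → ℝ) (Δ : ℕ) (r : ℕ → ℝ) (t : ℝ) : ℝ :=
  ∫ s in (0:ℝ)..t, Herr lam Δ r s * (lam s) ^ 2

/-- `ω_r(t) = α_r(t) λ(t) + β_r(t) u(t)`. -/
def omegaAux (lam : ℝ → ℝ) (Δ : ℕ) (r : ℕ → ℝ) (t : ℝ) : ℝ :=
  alphaAux lam Δ r t * lam t + betaAux lam Δ r t * uAux lam t

/-- `t^-_{p,δ} = (1-δ)/(ε Υ_r)`. -/
def tMinus (Δ : ℕ) (r : ℕ → ℝ) (ε δ : ℝ) : ℝ := (1 - δ) / (ε * Upsilon Δ r)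

/-- `t^+_{p,δ} = (1+δ)/(ε Υ_r)`. -/
def tPlus (Δ : ℕ) (r : ℕ → ℝ) (ε δ : ℝ) : ℝ := (1 + δ) / (ε * Upsilon Δ r)

/-- `w^-_{p,δ}`. -/
def wMinus (lam : ℝ → ℝ) (Δ : ℕ) (r : ℕ → ℝ) (ε δ : ℝ) (t : ℝ) : ℝ :=
  if t ≤ tMinus Δ r ε δ then lam t + (1 + δ / 2) * ε * omegaAux lam Δ r t
  else lam (tMinus Δ r ε δ) + (1 + δ / 2) * ε * omegaAux lam Δ r (tMinus Δ r ε δ)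

/-- `w^+_{p,δ}`. -/
def wPlus (lam : ℝ → ℝ) (Δ : ℕ) (r : ℕ → ℝ) (ε δ : ℝ) (t : ℝ) : ℝ :=
  if t ≤ tPlus Δ r ε δ then lam t + (1 - δ / 2) * ε * omegaAux lam Δ r t
  else lam (tPlus Δ r ε δ) + (1 - δ / 2) * ε * omegaAux lam Δ r (tPlus Δ r ε δ)

/-- `Ī^-_{p,δ}(t) = e^{-λ(t)} + (1-δ) ε I_r(t)`. -/
def IbarMinus (lam : ℝ → ℝ) (Δ : ℕ) (r : ℕ → ℝ) (ε δ : ℝ) (t : ℝ) : ℝ :=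
  Real.exp (-lam t) + (1 - δ) * ε * Ierr lam Δ r t

/-- `Ī^+_{p,δ}(t) = e^{-λ(t)} + (1+δ) ε I_r(t)`. -/
def IbarPlus (lam : ℝ → ℝ) (Δ : ℕ) (r : ℕ → ℝ) (ε δ : ℝ) (t : ℝ) : ℝ :=
  Real.exp (-lam t) + (1 + δ) * ε * Ierr lam Δ r t

/-- `Ĩ_p(x) = e^{-x} (1 + ε Σ_{k=1}^{Δ-2} x^k/k! · s_{k+2})`. -/
def Itilde (Δ : ℕ) (r : ℕ → ℝ) (ε : ℝ) (x : ℝ) : ℝ :=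
  Real.exp (-x) *
    (1 + ε * ∑ k ∈ Finset.Icc 1 (Δ - 2), x ^ k / (Nat.factorial k : ℝ) * tailS Δ r (k + 2))

/-!
Along the solution, `λ' = e^{-λ}(1+λ)` turns `H_r(t)` into `e^{-2λ(t)} R(λ(t))` with
`R = reducedHerr`, i.e. `R(y) = F(y) + (1+y) G(y) - e^{-y}(1+y)(1+2y) Φ(y)` for `F = sPoly`,
`G = rPoly` and `Φ = sPolyIntegral`. As `x^k/(1+x)^2 ≤ y^{k-2}` on `[0, y]`, `y^2 Φ(y) ≤ e^y F(y)`,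
hence `y^2 R(y) ≥ Σ_d r_d C_d(y)`, where `C_d = degreeContribution d` is a polynomial with leading
term `(1/(d-2)! - 1/(d-1)!) y^{d+1}`. There are finitely many `d ≤ Δ`, so for large `y` all
`C_d(y)` are positive, uniformly in `r`; and `λ(t) → ∞` since `(e^λ)' = 1 + λ ≥ 1`.
-/

open Set Topology

section ODE

variable {lam : ℝ → ℝ}

theorem lam_nonneg_of_ode (hdiff : Differentiable ℝ lam) (h0 : lam 0 = 0)
    (hode : ∀ t : ℝ, 0 ≤ t → deriv lam t = Real.exp (-lam t) * (1 + lam t))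
    {t : ℝ} (ht : 0 ≤ t) : 0 ≤ lam t := by
  have key : ∀ x ∈ Icc 0 t, -lam x ≤ 0 :=
    image_le_of_deriv_right_lt_deriv_boundary (f' := fun x => -deriv lam x)
      hdiff.continuous.neg.continuousOn (fun x _ => (hdiff x).hasDerivAt.neg.hasDerivWithinAt)
      (by simp [h0]) (fun _ => hasDerivAt_const _ (0 : ℝ))
      (fun x hx hx0 => by simp [hode x hx.1, neg_eq_zero.1 hx0])
  linarith [key t ⟨ht, le_rfl⟩]

theorem one_add_le_exp_lam (hdiff : Differentiable ℝ lam) (h0 : lam 0 = 0)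
    (hode : ∀ t : ℝ, 0 ≤ t → deriv lam t = Real.exp (-lam t) * (1 + lam t))
    {t : ℝ} (ht : 0 ≤ t) : 1 + t ≤ Real.exp (lam t) := by
  have hmono : MonotoneOn (fun s => Real.exp (lam s) - s) (Ici 0) := by
    refine monotoneOn_of_hasDerivWithinAt_nonneg (f' := lam) (convex_Ici 0)
      (hdiff.continuous.rexp.sub continuous_id).continuousOn
      (fun s hs => ?_) (fun s hs => lam_nonneg_of_ode hdiff h0 hode (interior_subset hs))
    have hs : 0 ≤ s := interior_subset hs
    refine ((((hdiff s).hasDerivAt.exp).sub (hasDerivAt_id s)).congr_deriv ?_).hasDerivWithinAt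
    rw [hode s hs, ← mul_assoc, ← Real.exp_add]
    simp
  have := hmono (mem_Ici.2 le_rfl) ht ht
  simp only [h0, Real.exp_zero, sub_zero] at this
  linarith

theorem tendsto_lam_atTop (hdiff : Differentiable ℝ lam) (h0 : lam 0 = 0)
    (hode : ∀ t : ℝ, 0 ≤ t → deriv lam t = Real.exp (-lam t) * (1 + lam t)) :
    Tendsto lam atTop atTop := by
  refine Real.tendsto_exp_comp_atTop.1 (tendsto_atTop_mono' _ ?_ tendsto_id)
  filter_upwards [eventually_ge_atTop 0] with t ht
  show t ≤ _
  linarith [one_add_le_exp_lam hdiff h0 hode ht]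

end ODE

section HerrFormula

def sPoly (Δ : ℕ) (r : ℕ → ℝ) (x : ℝ) : ℝ :=
  ∑ k ∈ Finset.Icc 2 (Δ - 1), x ^ k / (Nat.factorial k : ℝ) * tailS Δ r (k + 1)

def sPolyIntegral (Δ : ℕ) (r : ℕ → ℝ) (y : ℝ) : ℝ :=
  ∫ x in (0:ℝ)..y, Real.exp x / (1 + x) ^ 2 * sPoly Δ r x

def rPoly (Δ : ℕ) (r : ℕ → ℝ) (y : ℝ) : ℝ :=
  ∑ k ∈ Finset.range (Δ - 1), y ^ k / (Nat.factorial k : ℝ) * r (k + 2)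

def reducedHerr (Δ : ℕ) (r : ℕ → ℝ) (y : ℝ) : ℝ :=
  sPoly Δ r y + (1 + y) * rPoly Δ r y
    - Real.exp (-y) * (1 + y) * (1 + 2 * y) * sPolyIntegral Δ r y

variable (Δ : ℕ) (r : ℕ → ℝ)

theorem continuous_sPoly : Continuous (sPoly Δ r) := by
  unfold sPoly
  fun_prop

theorem continuousOn_sPolyIntegrand :
    ContinuousOn (fun x => Real.exp x / (1 + x) ^ 2 * sPoly Δ r x) (Ioi (-1)) := by
  refine ContinuousOn.mul ?_ (continuous_sPoly Δ r).continuousOn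
  exact Real.continuous_exp.continuousOn.div (by fun_prop)
    fun x hx => pow_ne_zero _ (by linarith [mem_Ioi.1 hx])

theorem uIcc_zero_subset_Ioi_neg_one {y : ℝ} (hy : -1 < y) : uIcc 0 y ⊆ Ioi (-1) :=
  ordConnected_Ioi.uIcc_subset (mem_Ioi.2 (by norm_num)) hy

theorem hasDerivAt_sPolyIntegral {y : ℝ} (hy : -1 < y) :
    HasDerivAt (sPolyIntegral Δ r) (Real.exp y / (1 + y) ^ 2 * sPoly Δ r y) y :=
  intervalIntegral.integral_hasDerivAt_right
    (((continuousOn_sPolyIntegrand Δ r).mono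
      (uIcc_zero_subset_Ioi_neg_one hy)).intervalIntegrable)
    ((continuousOn_sPolyIntegrand Δ r).stronglyMeasurableAtFilter isOpen_Ioi y hy)
    ((continuousOn_sPolyIntegrand Δ r).continuousAt (isOpen_Ioi.mem_nhds hy))

variable {lam : ℝ → ℝ}

theorem Herr_eq (hdiff : Differentiable ℝ lam)
    (hode : ∀ t : ℝ, 0 ≤ t → deriv lam t = Real.exp (-lam t) * (1 + lam t))
    {t : ℝ} (ht : 0 < t) (hlam : -1 < lam t) :
    Herr lam Δ r t = Real.exp (-lam t) ^ 2 * reducedHerr Δ r (lam t) := by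
  set y := lam t
  have hlam' : HasDerivAt lam (Real.exp (-y) * (1 + y)) t := hode t ht.le ▸ (hdiff t).hasDerivAt
  have hLamErr : LamErr lam Δ r =ᶠ[𝓝 t]
      fun s => Real.exp (-lam s) * (1 + lam s) * sPolyIntegral Δ r (lam s) := by
    filter_upwards [Ioi_mem_nhds ht] with s hs
    rw [LamErr, hode s (le_of_lt hs)]
    rfl
  have hderiv : HasDerivAt
      (fun s => Real.exp (-lam s) * (1 + lam s) * sPolyIntegral Δ r (lam s)) _ t :=
    ((hlam'.neg.exp.mul (hlam'.const_add 1)).mul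
    ((hasDerivAt_sPolyIntegral Δ r hlam).comp t hlam'))
  rw [Herr, hLamErr.deriv_eq, hderiv.deriv, hLamErr.self_of_nhds, hode t ht.le, ← rPoly,
    reducedHerr]
  simp only [Pi.mul_apply, Pi.neg_apply]
  have h1y : 1 + y ≠ 0 := by linarith
  rw [Real.exp_neg]
  field_simp
  ring

end HerrFormula

section Bounds

variable {Δ : ℕ} {r : ℕ → ℝ}

theorem sum_mul_tailS_succ (f : ℕ → ℝ) :
    ∑ k ∈ Finset.Icc 2 (Δ - 1), f k * tailS Δ r (k + 1)
      = ∑ d ∈ Finset.Icc 3 Δ, r d * ∑ k ∈ Finset.Icc 2 (d - 1), f k := by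
  simp only [tailS, Finset.mul_sum]
  rw [Finset.sum_comm' (t' := Finset.Icc 3 Δ) (s' := fun d => Finset.Icc 2 (d - 1))]
  · exact Finset.sum_congr rfl fun d _ => Finset.sum_congr rfl fun k _ => mul_comm _ _
  · intro k d
    simp only [Finset.mem_Icc]
    omega

theorem rPoly_eq_sum_Icc (y : ℝ) :
    rPoly Δ r y = ∑ d ∈ Finset.Icc 2 Δ, r d * (y ^ (d - 2) / (Nat.factorial (d - 2) : ℝ)) := by
  rw [← Finset.Ico_add_one_right_eq_Icc, Finset.sum_Ico_eq_sum_range,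
    show Δ + 1 - 2 = Δ - 1 by omega, rPoly]
  refine Finset.sum_congr rfl fun k _ => ?_
  rw [Nat.add_sub_cancel_left, add_comm 2 k, mul_comm]

theorem rPoly_eq_of_memR (hΔ : 2 ≤ Δ) (hr : memR Δ r) (y : ℝ) :
    rPoly Δ r y = ∑ d ∈ Finset.Icc 3 Δ, r d * (y ^ (d - 2) / (Nat.factorial (d - 2) : ℝ) - 1) := by
  have hIcc : Finset.Icc 2 Δ = insert 2 (Finset.Icc 3 Δ) := by
    ext d
    simp only [Finset.mem_Icc, Finset.mem_insert]
    omega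
  rw [rPoly_eq_sum_Icc, hIcc, Finset.sum_insert (by simp)]
  simp only [mul_sub, mul_one, Finset.sum_sub_distrib, hr.2.2.2, hr.1]
  norm_num
  ring

theorem sq_mul_pow_le {x y : ℝ} (hx : 0 ≤ x) (hxy : x ≤ y) {k : ℕ} (hk : 2 ≤ k) :
    y ^ 2 * x ^ k ≤ (1 + x) ^ 2 * y ^ k := by
  obtain ⟨j, rfl⟩ := Nat.exists_eq_add_of_le hk
  rw [pow_add, pow_add]
  have : x ^ 2 ≤ (1 + x) ^ 2 := by nlinarith
  have : x ^ j ≤ y ^ j := pow_le_pow_left₀ hx hxy j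
  calc y ^ 2 * (x ^ 2 * x ^ j) ≤ y ^ 2 * ((1 + x) ^ 2 * y ^ j) := by gcongr
    _ = (1 + x) ^ 2 * (y ^ 2 * y ^ j) := by ring

theorem sPoly_nonneg (hs : ∀ k, 3 ≤ k → 0 ≤ tailS Δ r k) {x : ℝ} (hx : 0 ≤ x) :
    0 ≤ sPoly Δ r x :=
  Finset.sum_nonneg fun k hk =>
    mul_nonneg (by positivity) (hs _ (by linarith [(Finset.mem_Icc.1 hk).1]))

theorem sq_mul_sPoly_le (hs : ∀ k, 3 ≤ k → 0 ≤ tailS Δ r k) {x y : ℝ} (hx : 0 ≤ x)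
    (hxy : x ≤ y) : y ^ 2 * sPoly Δ r x ≤ (1 + x) ^ 2 * sPoly Δ r y := by
  simp only [sPoly, Finset.mul_sum]
  refine Finset.sum_le_sum fun k hk => ?_
  have hk := Finset.mem_Icc.1 hk
  have := sq_mul_pow_le hx hxy hk.1
  have := hs (k + 1) (by omega)
  calc y ^ 2 * (x ^ k / k.factorial * tailS Δ r (k + 1))
      = y ^ 2 * x ^ k * (tailS Δ r (k + 1) / k.factorial) := by ring
    _ ≤ (1 + x) ^ 2 * y ^ k * (tailS Δ r (k + 1) / k.factorial) := by gcongr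
    _ = (1 + x) ^ 2 * (y ^ k / k.factorial * tailS Δ r (k + 1)) := by ring

theorem sq_mul_sPolyIntegral_le (hs : ∀ k, 3 ≤ k → 0 ≤ tailS Δ r k) {y : ℝ} (hy : 0 ≤ y) :
    y ^ 2 * sPolyIntegral Δ r y ≤ Real.exp y * sPoly Δ r y := by
  have hint : IntervalIntegrable (fun x => Real.exp x / (1 + x) ^ 2 * sPoly Δ r x) volume 0 y :=
    ((continuousOn_sPolyIntegrand Δ r).mono
      (uIcc_zero_subset_Ioi_neg_one (by linarith))).intervalIntegrable
  have hpt : ∀ x ∈ Icc 0 y,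
      y ^ 2 * (Real.exp x / (1 + x) ^ 2 * sPoly Δ r x) ≤ Real.exp x * sPoly Δ r y := by
    intro x hx
    have h1x : 0 < 1 + x := by linarith [hx.1]
    have := sq_mul_sPoly_le hs hx.1 hx.2
    calc y ^ 2 * (Real.exp x / (1 + x) ^ 2 * sPoly Δ r x)
        = Real.exp x / (1 + x) ^ 2 * (y ^ 2 * sPoly Δ r x) := by ring
      _ ≤ Real.exp x / (1 + x) ^ 2 * ((1 + x) ^ 2 * sPoly Δ r y) := by gcongr
      _ = Real.exp x * sPoly Δ r y := by field_simp
  calc y ^ 2 * sPolyIntegral Δ r y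
      = ∫ x in (0:ℝ)..y, y ^ 2 * (Real.exp x / (1 + x) ^ 2 * sPoly Δ r x) := by
        rw [sPolyIntegral, intervalIntegral.integral_const_mul]
    _ ≤ ∫ x in (0:ℝ)..y, Real.exp x * sPoly Δ r y :=
        intervalIntegral.integral_mono_on hy (hint.const_mul _)
          ((Real.continuous_exp.mul continuous_const).intervalIntegrable _ _) hpt
    _ = (Real.exp y - 1) * sPoly Δ r y := by
        rw [intervalIntegral.integral_mul_const, integral_exp, Real.exp_zero]
    _ ≤ Real.exp y * sPoly Δ r y := by nlinarith [sPoly_nonneg hs hy]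

end Bounds

def degreeContribution (d : ℕ) (y : ℝ) : ℝ :=
  y ^ 2 * (1 + y) * (y ^ (d - 2) / (Nat.factorial (d - 2) : ℝ) - 1)
    - (y ^ 2 + 3 * y + 1) * ∑ k ∈ Finset.Icc 2 (d - 1), y ^ k / (Nat.factorial k : ℝ)

theorem sum_Icc_pow_div_factorial_le (n : ℕ) {y : ℝ} (hy : 1 ≤ y) :
    ∑ k ∈ Finset.Icc 2 (n + 1), y ^ k / (Nat.factorial k : ℝ) ≤ n * y ^ (n + 1) := by
  calc ∑ k ∈ Finset.Icc 2 (n + 1), y ^ k / (Nat.factorial k : ℝ)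
      ≤ ∑ _k ∈ Finset.Icc 2 (n + 1), y ^ (n + 1) := by
        refine Finset.sum_le_sum fun k hk => ?_
        calc y ^ k / (Nat.factorial k : ℝ) ≤ y ^ k :=
              div_le_self (by positivity) (Nat.one_le_cast.2 k.factorial_pos)
          _ ≤ y ^ (n + 1) := pow_le_pow_right₀ hy (Finset.mem_Icc.1 hk).2
    _ = n * y ^ (n + 1) := by simp

theorem eventually_degreeContribution_pos {d : ℕ} (hd : 3 ≤ d) :
    ∀ᶠ y in atTop, 0 < degreeContribution d y := by
  obtain ⟨n, rfl⟩ := Nat.exists_eq_add_of_le' hd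
  set u : ℝ := 1 / (n + 1).factorial
  set v : ℝ := 1 / (n + 2).factorial
  have hv : 0 < v := by positivity
  have hv1 : v ≤ 1 := div_le_self zero_le_one (by exact_mod_cast (n + 2).factorial_pos)
  have huv : v < u := one_div_lt_one_div_of_lt (by positivity)
    (by exact_mod_cast (Nat.factorial_lt n.succ_pos).2 (Nat.lt_succ_self _))
  -- leading term `(u - v) y^(n+4)`; the rest is at least `-(5n+6) y^(n+3)` once `y ≥ 1`
  filter_upwards [eventually_ge_atTop 1, eventually_gt_atTop ((5 * n + 6) / (u - v))]
    with y hy1 hyc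
  set p := y ^ (n + 1)
  set L := ∑ k ∈ Finset.Icc 2 (n + 1), y ^ k / (Nat.factorial k : ℝ)
  have hsplit : ∑ k ∈ Finset.Icc 2 (n + 3 - 1), y ^ k / (Nat.factorial k : ℝ)
      = L + p * y * v := by
    rw [show n + 3 - 1 = n + 1 + 1 by omega, Finset.sum_Icc_succ_top (by omega), pow_succ,
      div_eq_mul_one_div (y ^ (n + 1) * y)]
  have hB : degreeContribution (n + 3) y
      = y ^ 2 * (1 + y) * (p * u - 1) - (y ^ 2 + 3 * y + 1) * (L + p * y * v) := by
    rw [degreeContribution, hsplit, show n + 3 - 2 = n + 1 by omega, div_eq_mul_one_div]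
  have hL0 : 0 ≤ L := Finset.sum_nonneg fun k _ => by positivity
  have hL : L ≤ n * p := sum_Icc_pow_div_factorial_le n hy1
  have hpy : y ≤ p := by simpa using pow_le_pow_right₀ hy1 (Nat.le_add_left 1 n)
  have hcy : 5 * n + 6 < (u - v) * y := by rwa [div_lt_iff₀' (by linarith)] at hyc
  have hu : 0 < u := by positivity
  have h1 : (y ^ 2 + 3 * y + 1) * L ≤ 5 * y ^ 2 * (n * p) := by
    have : y ^ 2 + 3 * y + 1 ≤ 5 * y ^ 2 := by nlinarith
    calc (y ^ 2 + 3 * y + 1) * L ≤ 5 * y ^ 2 * L := by gcongr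
      _ ≤ 5 * y ^ 2 * (n * p) := by gcongr
  have h2 : (3 * y ^ 2 + y) * p * v ≤ 4 * y ^ 2 * p := by
    have : (3 * y ^ 2 + y) * v ≤ 4 * y ^ 2 := by nlinarith
    nlinarith
  have h3 : y ^ 2 + y ^ 3 ≤ 2 * p * y ^ 2 := by nlinarith
  have h4 : 0 < p * y ^ 2 * ((u - v) * y - (5 * n + 6)) := by
    have : 0 < p := by linarith
    have : 0 < (u - v) * y - (5 * n + 6) := by linarith
    positivity
  have h5 : 0 ≤ p * y ^ 2 * u := by positivity
  rw [hB]
  nlinarith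

theorem tailS_nonneg_of_memR {Δ : ℕ} {r : ℕ → ℝ} (hr : memR Δ r) {k : ℕ} (hk : 3 ≤ k) :
    0 ≤ tailS Δ r k :=
  Finset.sum_nonneg fun d hd => hr.2.1 d (hk.trans (Finset.mem_Icc.1 hd).1) (Finset.mem_Icc.1 hd).2

theorem reducedHerr_pos {Δ : ℕ} {r : ℕ → ℝ} (hΔ : 2 ≤ Δ) (hr : memR Δ r) {y : ℝ} (hy : 0 < y)
    (hpos : ∀ d ∈ Finset.Icc 3 Δ, 0 < degreeContribution d y) : 0 < reducedHerr Δ r y := by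
  set P : ℕ → ℝ := fun d => ∑ k ∈ Finset.Icc 2 (d - 1), y ^ k / (Nat.factorial k : ℝ)
  set Q : ℕ → ℝ := fun d => y ^ (d - 2) / (Nat.factorial (d - 2) : ℝ) - 1
  have hF : sPoly Δ r y = ∑ d ∈ Finset.Icc 3 Δ, r d * P d := sum_mul_tailS_succ _
  have hG : rPoly Δ r y = ∑ d ∈ Finset.Icc 3 Δ, r d * Q d := rPoly_eq_of_memR hΔ hr y
  have hΦ := sq_mul_sPolyIntegral_le (fun k hk => tailS_nonneg_of_memR hr hk) hy.le
  have hsum : ∑ d ∈ Finset.Icc 3 Δ, r d * degreeContribution d y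
      = y ^ 2 * (1 + y) * rPoly Δ r y - (y ^ 2 + 3 * y + 1) * sPoly Δ r y := by
    rw [hF, hG, Finset.mul_sum, Finset.mul_sum, ← Finset.sum_sub_distrib]
    exact Finset.sum_congr rfl fun d _ => by rw [degreeContribution]; ring
  obtain ⟨d₀, hd₀, hrd₀⟩ : ∃ d ∈ Finset.Icc 3 Δ, 0 < r d :=
    Finset.exists_lt_of_sum_lt (by simp [hr.2.2.2])
  have hweighted : 0 < ∑ d ∈ Finset.Icc 3 Δ, r d * degreeContribution d y :=
    Finset.sum_pos' (fun d hd => mul_nonneg (hr.2.1 d (Finset.mem_Icc.1 hd).1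
      (Finset.mem_Icc.1 hd).2) (hpos d hd).le) ⟨d₀, hd₀, mul_pos hrd₀ (hpos d₀ hd₀)⟩
  have hexp : Real.exp (-y) * Real.exp y = 1 := by
    rw [← Real.exp_add, neg_add_cancel, Real.exp_zero]
  have hcoef : 0 ≤ Real.exp (-y) * (1 + y) * (1 + 2 * y) := by positivity
  have : 0 < y ^ 2 * reducedHerr Δ r y := by
    calc 0 < y ^ 2 * (1 + y) * rPoly Δ r y - (y ^ 2 + 3 * y + 1) * sPoly Δ r y := hsum ▸ hweighted
      _ = y ^ 2 * (sPoly Δ r y + (1 + y) * rPoly Δ r y)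
            - Real.exp (-y) * (1 + y) * (1 + 2 * y) * (Real.exp y * sPoly Δ r y) := by
          linear_combination (1 + y) * (1 + 2 * y) * sPoly Δ r y * hexp
      _ ≤ y ^ 2 * (sPoly Δ r y + (1 + y) * rPoly Δ r y)
            - Real.exp (-y) * (1 + y) * (1 + 2 * y) * (y ^ 2 * sPolyIntegral Δ r y) := by
          gcongr
      _ = y ^ 2 * reducedHerr Δ r y := by rw [reducedHerr]; ring
  exact pos_of_mul_pos_right this (by positivity)

/-- Eventual positivity of `H_r`: there is `θ > 0` with `H_r(t) > 0` for all
`r ∈ R_Δ` and `t ≥ θ`. -/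
theorem Herr_eventually_positive (Δ : ℕ) (hΔ : 3 ≤ Δ) (lam : ℝ → ℝ)
    (hdiff : Differentiable ℝ lam) (h0 : lam 0 = 0)
    (hode : ∀ t : ℝ, 0 ≤ t → deriv lam t = Real.exp (-lam t) * (1 + lam t)) :
    ∃ θ : ℝ, 0 < θ ∧ ∀ r : ℕ → ℝ, memR Δ r → ∀ t : ℝ, θ ≤ t → 0 < Herr lam Δ r t := by
  have hcontrib : ∀ᶠ y in atTop, 0 < y ∧ ∀ d ∈ Finset.Icc 3 Δ, 0 < degreeContribution d y :=
    (eventually_gt_atTop 0).and <| (Filter.eventually_all_finset _).2 fun d hd =>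
      eventually_degreeContribution_pos (Finset.mem_Icc.1 hd).1
  obtain ⟨θ, hθ⟩ := eventually_atTop.1
    (((tendsto_lam_atTop hdiff h0 hode).eventually hcontrib).and (eventually_gt_atTop 0))
  refine ⟨max θ 1, by positivity, fun r hr t ht => ?_⟩
  obtain ⟨⟨hlam, hpos⟩, ht0⟩ := hθ t (le_of_max_le_left ht)
  rw [Herr_eq Δ r hdiff hode ht0 (by linarith)]
  exact mul_pos (by positivity) (reducedHerr_pos (by omega) hr hlam hpos)
end
end

section
/- Properties of the approximations of the eigenfunction (Proposition 'Properties of the approximations of the eigenfunction'): Fix an integer Δ ≥ 3 and let δ ∈ (0,1). Then (a) for every ε ∈ (0,1] and every r ∈ R_Δ one has w^−_{p,δ}(0) = 0 and w^+_{p,δ}(0) = 0; and (b) there exists ε₀ > 0 such that for every ε ∈ (0,ε₀) and every r ∈ R_Δ, the functions w^−_{p,δ} and w^+_{p,δ} are monotone increasing on [0,∞). -/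
/-!
On `[0, T]` both profiles are `λ + c ω` with `c ≤ 3ε/2` and `c T ≤ 1`, and they are frozen
after `T`; `ω(0) = 0` because `α` and `β` are integrals from `0`. As `λ' ≥ 1/(1+t)`,
monotonicity reduces to `c (1 + t) |ω'(t)| ≤ 1`. By variation of parameters
`ω' = α λ' + β u'`, and the error term satisfies `|H| (1 + λ)² = O(e^{-3λ/2}) = O((1+t)^{-3/2})`,
so `|α| = O(√(1+t))` and `|β| = O(1)` uniformly in `r ∈ R_Δ`. Since `√(1+t) λ' = O(log t/√t)`
and `u' → 0`, also `ω' → 0`: beyond some `T₀` we have `|ω'| ≤ 1/2` and `c (1 + t) ≤ 1 + c ≤ 2`,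
while on `[0, T₀]` the derivative `ω'` is bounded and a small `c` suffices.
-/

open Real MeasureTheory Filter

noncomputable section

open Set Topology intervalIntegral
open scoped Nat

theorem sub_le_sub_of_hasDerivAt_le {f g f' g' : ℝ → ℝ} {a b : ℝ} (hab : a ≤ b)
    (hf : ContinuousOn f (Icc a b)) (hg : ContinuousOn g (Icc a b))
    (hf' : ∀ t ∈ Ioo a b, HasDerivAt f (f' t) t) (hg' : ∀ t ∈ Ioo a b, HasDerivAt g (g' t) t)
    (hle : ∀ t ∈ Ioo a b, f' t ≤ g' t) : f b - f a ≤ g b - g a := by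
  have hmono : MonotoneOn (fun t => g t - f t) (Icc a b) := by
    refine monotoneOn_of_hasDerivWithinAt_nonneg (f' := fun t => g' t - f' t) (convex_Icc a b)
      (hg.sub hf) (fun t ht => ?_) (fun t ht => ?_) <;> rw [interior_Icc] at *
    · exact ((hg' t ht).sub (hf' t ht)).hasDerivWithinAt
    · exact sub_nonneg.2 (hle t ht)
  have : g a - f a ≤ g b - f b := hmono (left_mem_Icc.2 hab) (right_mem_Icc.2 hab) hab
  linarith

theorem abs_sub_le_of_abs_hasDerivAt_le {f g f' g' : ℝ → ℝ} {a b : ℝ} (hab : a ≤ b)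
    (hf : ContinuousOn f (Icc a b)) (hg : ContinuousOn g (Icc a b))
    (hf' : ∀ t ∈ Ioo a b, HasDerivAt f (f' t) t) (hg' : ∀ t ∈ Ioo a b, HasDerivAt g (g' t) t)
    (hle : ∀ t ∈ Ioo a b, |f' t| ≤ g' t) : |f b - f a| ≤ g b - g a := by
  have hupper := sub_le_sub_of_hasDerivAt_le hab hf hg hf' hg' fun t ht => le_of_abs_le (hle t ht)
  have hlower := sub_le_sub_of_hasDerivAt_le (f := fun t => -f t) (f' := fun t => -f' t) hab hf.neg
    hg (fun t ht => (hf' t ht).neg) hg' fun t ht => neg_le.1 (neg_le_of_abs_le (hle t ht))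
  rw [abs_le]
  constructor <;> linarith

theorem MonotoneOn.ite_le_const {g : ℝ → ℝ} {a T : ℝ} (hg : MonotoneOn g (Icc a T))
    (haT : a ≤ T) : MonotoneOn (fun t => if t ≤ T then g t else g T) (Ici a) := by
  have hmin : ∀ t, (if t ≤ T then g t else g T) = g (min t T) := fun t => by
    split_ifs with h
    · rw [min_eq_left h]
    · rw [min_eq_right (le_of_not_ge h)]
  intro x hx y hy hxy
  simp only [hmin]
  exact hg ⟨le_min hx haT, min_le_right _ _⟩ ⟨le_min hy haT, min_le_right _ _⟩
    (min_le_min_right T hxy)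

theorem hasDerivAt_integral_of_continuousOn {f : ℝ → ℝ} {U : Set ℝ} {a t : ℝ} (hU : IsOpen U)
    (hf : ContinuousOn f U) (ht : t ∈ U) (hint : IntervalIntegrable f volume a t) :
    HasDerivAt (fun x => ∫ s in a..x, f s) (f t) t :=
  integral_hasDerivAt_right hint (hf.stronglyMeasurableAtFilter hU t ht)
    (hf.continuousAt (hU.mem_nhds ht))

theorem continuousOn_primitive_Icc_of_intervalIntegrable {f : ℝ → ℝ} {a b : ℝ} (hab : a ≤ b)
    (hf : IntervalIntegrable f volume a b) :
    ContinuousOn (fun x => ∫ s in a..x, f s) (Icc a b) := by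
  rw [← uIcc_of_le hab]
  exact continuousOn_primitive_interval' hf left_mem_uIcc

theorem intervalIntegrable_of_continuousOn_Ioc_of_abs_le {f : ℝ → ℝ} {a b C : ℝ}
    (hab : a ≤ b) (hf : ContinuousOn f (Ioc a b)) (hC : ∀ s ∈ Ioc a b, |f s| ≤ C) :
    IntervalIntegrable f volume a b := by
  rw [intervalIntegrable_iff_integrableOn_Ioc_of_le hab]
  refine IntegrableOn.of_bound measure_Ioc_lt_top (hf.aestronglyMeasurable measurableSet_Ioc) C ?_
  rw [ae_restrict_iff' measurableSet_Ioc]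
  exact ae_of_all _ hC

theorem abs_sum_pow_div_factorial_mul_le {s : Finset ℕ} {n : ℕ} {c : ℕ → ℝ} {x : ℝ}
    (hx : 0 ≤ x) (hs : ∀ k ∈ s, k ≤ n) (hc : ∀ k ∈ s, |c k| ≤ 1) :
    |∑ k ∈ s, x ^ k / (k ! : ℝ) * c k| ≤ s.card * (1 + x) ^ n := by
  calc |∑ k ∈ s, x ^ k / (k ! : ℝ) * c k| ≤ ∑ k ∈ s, |x ^ k / (k ! : ℝ) * c k| :=
        Finset.abs_sum_le_sum_abs _ _
    _ ≤ ∑ _k ∈ s, (1 + x) ^ n := Finset.sum_le_sum fun k hk => ?_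
    _ = s.card * (1 + x) ^ n := by rw [Finset.sum_const, nsmul_eq_mul]
  rw [abs_mul, abs_of_nonneg (by positivity)]
  calc x ^ k / (k ! : ℝ) * |c k| ≤ x ^ k / (k ! : ℝ) * 1 :=
        mul_le_mul_of_nonneg_left (hc k hk) (by positivity)
    _ ≤ x ^ k := by rw [mul_one]; exact div_le_self (by positivity) (mod_cast k.factorial_pos)
    _ ≤ (1 + x) ^ k := pow_le_pow_left₀ hx (by linarith) k
    _ ≤ (1 + x) ^ n := pow_le_pow_right₀ (by linarith) (hs k hk)

theorem one_add_pow_le_exp (m : ℕ) {x : ℝ} (hx : 0 ≤ x) :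
    (1 + x) ^ m ≤ 2 ^ m * m ! * exp (1 / 2) * exp (x / 2) := by
  have h := pow_div_factorial_le_exp ((1 + x) / 2) (by positivity) m
  rw [div_pow, div_div, div_le_iff₀ (by positivity)] at h
  calc (1 + x) ^ m ≤ exp ((1 + x) / 2) * (2 ^ m * m !) := h
    _ = 2 ^ m * m ! * exp (1 / 2) * exp (x / 2) := by
      rw [show (1 + x) / 2 = 1 / 2 + x / 2 by ring, exp_add]; ring

theorem one_sub_exp_neg_mul_le {x : ℝ} (hx : 0 ≤ x) : 1 - exp (-x) * (1 + x) ≤ x ^ 2 / 2 := by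
  have hderiv : ∀ y, HasDerivAt (fun y => 1 - exp (-y) * (1 + y)) (y * exp (-y)) y := fun y => by
    have h := ((hasDerivAt_id y).neg.exp.mul ((hasDerivAt_id y).const_add 1)).const_sub 1
    refine h.congr_deriv ?_
    simp only [id, Pi.neg_apply]
    ring
  have hsq : ∀ y : ℝ, HasDerivAt (fun y : ℝ => y ^ 2 / 2) y y := fun y => by
    simpa using (hasDerivAt_pow 2 y).div_const 2
  have := sub_le_sub_of_hasDerivAt_le hx (HasDerivAt.continuousOn fun y _ => hderiv y)
    (HasDerivAt.continuousOn fun y _ => hsq y) (fun y _ => hderiv y) (fun y _ => hsq y)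
    fun y hy => mul_le_of_le_one_right hy.1.le (exp_le_one_iff.2 (by linarith [hy.1]))
  simpa using this

theorem hasDerivAt_sqrt_one_add {s : ℝ} (hs : -1 < s) :
    HasDerivAt (fun s => √(1 + s)) (2 * √(1 + s))⁻¹ s := by
  refine (((hasDerivAt_id s).const_add 1).sqrt (by simp only [id]; linarith)).congr_deriv ?_
  simp [one_div]

theorem hasDerivAt_inv_sqrt_one_add {s : ℝ} (hs : -1 < s) :
    HasDerivAt (fun s => (√(1 + s))⁻¹) (-(2 * ((1 + s) * √(1 + s)))⁻¹) s := by
  have hpos : 0 < √(1 + s) := sqrt_pos.2 (by linarith)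
  refine ((hasDerivAt_sqrt_one_add hs).inv hpos.ne').congr_deriv ?_
  rw [sq_sqrt (by linarith)]
  field_simp

theorem tendsto_one_add_two_mul_log_div_sqrt :
    Tendsto (fun y => (1 + 2 * log y) / √y) atTop (𝓝 0) := by
  have hlog : Tendsto (fun y => log y / √y) atTop (𝓝 0) := by
    simpa only [sqrt_eq_rpow] using
      (isLittleO_log_rpow_atTop (by norm_num : (0 : ℝ) < 1 / 2)).tendsto_div_nhds_zero
  have h := (tendsto_inv_atTop_zero.comp tendsto_sqrt_atTop).add (hlog.const_mul 2)
  rw [mul_zero, add_zero] at h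
  exact h.congr fun y => by simp only [Function.comp]; ring

theorem tendsto_four_mul_one_add_two_mul_div_sq_add_inv :
    Tendsto (fun x : ℝ => 4 * ((1 + 2 * x) / x ^ 2) + x⁻¹) atTop (𝓝 0) := by
  have h := (((tendsto_inv_atTop_zero.mul tendsto_inv_atTop_zero).add
    (tendsto_inv_atTop_zero.const_mul 2)).const_mul 4).add (tendsto_inv_atTop_zero (𝕜 := ℝ))
  simp only [mul_zero, add_zero] at h
  refine h.congr' ?_
  filter_upwards [eventually_gt_atTop 0] with x hx
  field_simp

namespace memR

variable {Δ : ℕ} {r : ℕ → ℝ}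

theorem abs_le_one (hr : memR Δ r) {k : ℕ} (hk : 2 ≤ k) : |r k| ≤ 1 := by
  obtain ⟨h2, hnonneg, hzero, hsum⟩ := hr
  rcases hk.eq_or_lt with rfl | hk3
  · simp [h2]
  rcases le_or_gt k Δ with hkΔ | hkΔ
  · rw [abs_of_nonneg (hnonneg k hk3 hkΔ), ← hsum]
    exact Finset.single_le_sum (fun i hi => hnonneg i (Finset.mem_Icc.1 hi).1
      (Finset.mem_Icc.1 hi).2) (Finset.mem_Icc.2 ⟨hk3, hkΔ⟩)
  · simp [hzero k hkΔ]

theorem tailS_nonneg (hr : memR Δ r) {k : ℕ} (hk : 3 ≤ k) : 0 ≤ tailS Δ r k :=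
  Finset.sum_nonneg fun d hd =>
    hr.2.1 d (hk.trans (Finset.mem_Icc.1 hd).1) (Finset.mem_Icc.1 hd).2

theorem tailS_le_one (hr : memR Δ r) {k : ℕ} (hk : 3 ≤ k) : tailS Δ r k ≤ 1 := by
  rw [← hr.2.2.2]
  exact Finset.sum_le_sum_of_subset_of_nonneg (Finset.Icc_subset_Icc hk le_rfl)
    fun i hi _ => hr.2.1 i (Finset.mem_Icc.1 hi).1 (Finset.mem_Icc.1 hi).2

theorem three_le_Upsilon (hr : memR Δ r) : 3 ≤ Upsilon Δ r := by
  calc (3 : ℝ) = ∑ k ∈ Finset.Icc 3 Δ, 3 * r k := by rw [← Finset.mul_sum, hr.2.2.2, mul_one]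
    _ ≤ Upsilon Δ r := Finset.sum_le_sum fun k hk => by
        obtain ⟨hk3, hkΔ⟩ := Finset.mem_Icc.1 hk
        have hk3' : (3 : ℝ) ≤ k := mod_cast hk3
        exact mul_le_mul_of_nonneg_right (by nlinarith) (hr.2.1 k hk3 hkΔ)

variable {ε δ : ℝ}

theorem tMinus_nonneg (hr : memR Δ r) (hε : 0 < ε) (hδ : δ ≤ 1) : 0 ≤ tMinus Δ r ε δ :=
  div_nonneg (by linarith) (mul_nonneg hε.le (by linarith [hr.three_le_Upsilon]))

theorem tPlus_nonneg (hr : memR Δ r) (hε : 0 < ε) (hδ : 0 ≤ δ) : 0 ≤ tPlus Δ r ε δ :=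
  div_nonneg (by linarith) (mul_nonneg hε.le (by linarith [hr.three_le_Upsilon]))

theorem mul_tMinus_le_one (hr : memR Δ r) (hε : 0 < ε) (hδ : 0 ≤ δ) :
    (1 + δ / 2) * ε * tMinus Δ r ε δ ≤ 1 := by
  have hΥ := hr.three_le_Upsilon
  rw [tMinus, mul_div_assoc', div_le_one (by positivity)]
  nlinarith [mul_nonneg hε.le hδ, mul_nonneg hε.le (mul_nonneg hδ hδ)]

theorem mul_tPlus_le_one (hr : memR Δ r) (hε : 0 < ε) (hδ0 : 0 ≤ δ) (hδ1 : δ ≤ 1) :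
    (1 - δ / 2) * ε * tPlus Δ r ε δ ≤ 1 := by
  have hΥ := hr.three_le_Upsilon
  rw [tPlus, mul_div_assoc', div_le_one (by positivity)]
  nlinarith [mul_le_mul_of_nonneg_left hδ1 hε.le, mul_nonneg hε.le (mul_nonneg hδ0 hδ0)]

end memR

def tailPoly (Δ : ℕ) (r : ℕ → ℝ) (x : ℝ) : ℝ :=
  ∑ k ∈ Finset.Icc 2 (Δ - 1), x ^ k / (k ! : ℝ) * tailS Δ r (k + 1)

def coeffPoly (Δ : ℕ) (r : ℕ → ℝ) (x : ℝ) : ℝ :=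
  ∑ k ∈ Finset.range (Δ - 1), x ^ k / (k ! : ℝ) * r (k + 2)

def lamErrIntegrand (Δ : ℕ) (r : ℕ → ℝ) (x : ℝ) : ℝ := exp x / (1 + x) ^ 2 * tailPoly Δ r x

def lamErrPrimitive (Δ : ℕ) (r : ℕ → ℝ) (y : ℝ) : ℝ :=
  ∫ x in (0 : ℝ)..y, lamErrIntegrand Δ r x

/-- `H_r(t) = herrProfile Δ r (λ t)`: substituting `λ' = e^{-λ}(1+λ)` and `λ'' = -λ e^{-λ} λ'`
into the definition of `H_r` leaves a function of `λ` alone. -/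
def herrProfile (Δ : ℕ) (r : ℕ → ℝ) (x : ℝ) : ℝ :=
  exp (-2 * x) * (1 + x) *
    (exp (-x) * ((1 + x) * lamErrIntegrand Δ r x - (1 + 2 * x) * lamErrPrimitive Δ r x) +
      coeffPoly Δ r x)

def herrConst (Δ : ℕ) : ℝ := 3 * Δ * (2 ^ (Δ + 4) * (Δ + 4)! * exp (1 / 2))

theorem herrConst_nonneg (Δ : ℕ) : 0 ≤ herrConst Δ := by
  unfold herrConst; positivity

section LamErr

variable {Δ : ℕ} {r : ℕ → ℝ}

theorem tailPoly_nonneg (hr : memR Δ r) {x : ℝ} (hx : 0 ≤ x) : 0 ≤ tailPoly Δ r x :=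
  Finset.sum_nonneg fun k hk => by
    have := hr.tailS_nonneg (k := k + 1) (by linarith [(Finset.mem_Icc.1 hk).1])
    positivity

theorem tailPoly_le (hr : memR Δ r) {x : ℝ} (hx : 0 ≤ x) : tailPoly Δ r x ≤ Δ * (1 + x) ^ Δ := by
  have hcard : ((Finset.Icc 2 (Δ - 1)).card : ℝ) ≤ Δ := mod_cast by rw [Nat.card_Icc]; omega
  refine (le_abs_self _).trans <| (abs_sum_pow_div_factorial_mul_le (n := Δ) hx
    (fun k hk => by have := (Finset.mem_Icc.1 hk).2; omega) fun k hk => ?_).trans (by gcongr)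
  have hk3 : 3 ≤ k + 1 := by linarith [(Finset.mem_Icc.1 hk).1]
  rw [abs_of_nonneg (hr.tailS_nonneg hk3)]
  exact hr.tailS_le_one hk3

theorem abs_coeffPoly_le (hr : memR Δ r) {x : ℝ} (hx : 0 ≤ x) :
    |coeffPoly Δ r x| ≤ Δ * (1 + x) ^ Δ := by
  have hcard : ((Finset.range (Δ - 1)).card : ℝ) ≤ Δ := mod_cast by rw [Finset.card_range]; omega
  exact (abs_sum_pow_div_factorial_mul_le (n := Δ) hx
    (fun k hk => by have := Finset.mem_range.1 hk; omega)
    fun k _ => hr.abs_le_one (by omega)).trans (by gcongr)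

theorem continuousOn_lamErrIntegrand : ContinuousOn (lamErrIntegrand Δ r) (Ioi (-1)) := by
  refine ContinuousOn.mul (continuous_exp.continuousOn.div (by fun_prop) fun x hx => ?_)
    (by unfold tailPoly; fun_prop)
  have : 0 < 1 + x := by linarith [mem_Ioi.1 hx]
  positivity

theorem lamErrIntegrand_nonneg (hr : memR Δ r) {x : ℝ} (hx : 0 ≤ x) :
    0 ≤ lamErrIntegrand Δ r x :=
  mul_nonneg (by positivity) (tailPoly_nonneg hr hx)

theorem lamErrIntegrand_le (hr : memR Δ r) {x : ℝ} (hx : 0 ≤ x) :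
    lamErrIntegrand Δ r x ≤ Δ * (1 + x) ^ Δ * exp x := by
  have hdiv : exp x / (1 + x) ^ 2 ≤ exp x :=
    div_le_self (exp_pos x).le (one_le_pow₀ (by linarith))
  calc lamErrIntegrand Δ r x ≤ exp x * tailPoly Δ r x :=
        mul_le_mul_of_nonneg_right hdiv (tailPoly_nonneg hr hx)
    _ ≤ exp x * (Δ * (1 + x) ^ Δ) := by gcongr; exact tailPoly_le hr hx
    _ = Δ * (1 + x) ^ Δ * exp x := mul_comm _ _

theorem intervalIntegrable_lamErrIntegrand {y : ℝ} (hy : -1 < y) :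
    IntervalIntegrable (lamErrIntegrand Δ r) volume 0 y :=
  (continuousOn_lamErrIntegrand.mono fun _ hx =>
    lt_of_lt_of_le (lt_min (by norm_num) hy) hx.1).intervalIntegrable

theorem hasDerivAt_lamErrPrimitive {y : ℝ} (hy : -1 < y) :
    HasDerivAt (lamErrPrimitive Δ r) (lamErrIntegrand Δ r y) y :=
  hasDerivAt_integral_of_continuousOn isOpen_Ioi continuousOn_lamErrIntegrand hy
    (intervalIntegrable_lamErrIntegrand hy)

theorem lamErrPrimitive_nonneg (hr : memR Δ r) {y : ℝ} (hy : 0 ≤ y) :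
    0 ≤ lamErrPrimitive Δ r y :=
  integral_nonneg hy fun _ hx => lamErrIntegrand_nonneg hr hx.1

theorem lamErrPrimitive_le (hr : memR Δ r) {y : ℝ} (hy : 0 ≤ y) :
    lamErrPrimitive Δ r y ≤ Δ * (1 + y) ^ Δ * exp y := by
  have hmono : lamErrPrimitive Δ r y ≤ ∫ x in (0 : ℝ)..y, Δ * (1 + y) ^ Δ * exp x :=
    integral_mono_on hy (intervalIntegrable_lamErrIntegrand (by linarith))
      ((continuous_const.mul continuous_exp).intervalIntegrable 0 y) fun x hx =>
        (lamErrIntegrand_le hr hx.1).trans (by gcongr <;> linarith [hx.1, hx.2])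
  rw [intervalIntegral.integral_const_mul, integral_exp, exp_zero] at hmono
  nlinarith [pow_nonneg (show (0 : ℝ) ≤ 1 + y by linarith) Δ, (Nat.cast_nonneg Δ : (0 : ℝ) ≤ Δ)]

theorem continuousOn_herrProfile : ContinuousOn (herrProfile Δ r) (Ioi (-1)) := by
  have hF : ContinuousOn (lamErrPrimitive Δ r) (Ioi (-1)) :=
    HasDerivAt.continuousOn fun _ hy => hasDerivAt_lamErrPrimitive hy
  have hP : Continuous (coeffPoly Δ r) := by unfold coeffPoly; fun_prop
  unfold herrProfile
  exact (Continuous.continuousOn (by fun_prop)).mul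
    (((Continuous.continuousOn (by fun_prop)).mul
      (((Continuous.continuousOn (by fun_prop)).mul continuousOn_lamErrIntegrand).sub
        ((Continuous.continuousOn (by fun_prop)).mul hF))).add hP.continuousOn)

theorem abs_herrProfile_le (hr : memR Δ r) {x : ℝ} (hx : 0 ≤ x) :
    |herrProfile Δ r x| ≤ 3 * Δ * (1 + x) ^ (Δ + 2) * exp (-2 * x) := by
  set X : ℝ := Δ * (1 + x) ^ Δ
  have hf := lamErrIntegrand_le hr hx
  have hF := lamErrPrimitive_le hr hx
  have hf0 := lamErrIntegrand_nonneg hr hx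
  have hF0 := lamErrPrimitive_nonneg hr hx
  have hexp : exp (-x) * exp x = 1 := by rw [← exp_add, neg_add_cancel, exp_zero]
  have hinner : |exp (-x) * ((1 + x) * lamErrIntegrand Δ r x -
      (1 + 2 * x) * lamErrPrimitive Δ r x)| ≤ (2 + 3 * x) * X := by
    rw [abs_mul, abs_of_pos (exp_pos _)]
    calc exp (-x) * |(1 + x) * lamErrIntegrand Δ r x - (1 + 2 * x) * lamErrPrimitive Δ r x|
        ≤ exp (-x) * ((1 + x) * (X * exp x) + (1 + 2 * x) * (X * exp x)) := by
          gcongr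
          rw [abs_le]
          constructor <;> nlinarith
      _ = (2 + 3 * x) * X * (exp (-x) * exp x) := by ring
      _ = (2 + 3 * x) * X := by rw [hexp, mul_one]
  calc |herrProfile Δ r x|
      ≤ exp (-2 * x) * (1 + x) * ((2 + 3 * x) * X + X) := by
        unfold herrProfile
        rw [abs_mul, abs_of_pos (by positivity)]
        gcongr
        exact (abs_add_le _ _).trans (add_le_add hinner (abs_coeffPoly_le hr hx))
    _ ≤ 3 * Δ * (1 + x) ^ (Δ + 2) * exp (-2 * x) := by
        have : 0 ≤ X * exp (-2 * x) := by positivity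
        rw [pow_add]
        nlinarith

theorem abs_herrProfile_mul_sq_le (hr : memR Δ r) {x : ℝ} (hx : 0 ≤ x) :
    |herrProfile Δ r x| * (1 + x) ^ 2 ≤ herrConst Δ * exp (-(3 / 2) * x) := by
  have hpow := one_add_pow_le_exp (Δ + 4) hx
  have hexp : exp (x / 2) * exp (-2 * x) = exp (-(3 / 2) * x) := by rw [← exp_add]; ring_nf
  calc |herrProfile Δ r x| * (1 + x) ^ 2
      ≤ 3 * Δ * (1 + x) ^ (Δ + 4) * exp (-2 * x) := by
        have := abs_herrProfile_le hr hx
        rw [show Δ + 4 = (Δ + 2) + 2 by ring, pow_add]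
        nlinarith [(by positivity : 0 ≤ (1 + x) ^ 2)]
    _ ≤ 3 * Δ * (2 ^ (Δ + 4) * (Δ + 4)! * exp (1 / 2) * exp (x / 2)) * exp (-2 * x) := by
        gcongr
    _ = herrConst Δ * exp (-(3 / 2) * x) := by rw [herrConst, ← hexp]; ring

end LamErr

structure IsLamSolution (lam : ℝ → ℝ) : Prop where
  differentiable : Differentiable ℝ lam
  map_zero : lam 0 = 0
  deriv_eq : ∀ t, 0 ≤ t → deriv lam t = exp (-lam t) * (1 + lam t)

def uIntegrand (lam : ℝ → ℝ) (s : ℝ) : ℝ := (deriv lam s - 1) / lam s ^ 2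

def uIntegral (lam : ℝ → ℝ) (t : ℝ) : ℝ := ∫ s in (0 : ℝ)..t, uIntegrand lam s

def uDeriv (lam : ℝ → ℝ) (t : ℝ) : ℝ := deriv lam t * uIntegral lam t + lam t * uIntegrand lam t

def omegaDeriv (lam : ℝ → ℝ) (Δ : ℕ) (r : ℕ → ℝ) (t : ℝ) : ℝ :=
  alphaAux lam Δ r t * deriv lam t + betaAux lam Δ r t * uDeriv lam t

def omegaDerivBound (lam : ℝ → ℝ) (t : ℝ) : ℝ := √(1 + t) * deriv lam t + |uDeriv lam t|

/-- `w^∓_{p,δ}` is `frozenProfile` with `c = (1 ± δ/2) ε` and `T = t^∓_{p,δ}`. -/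
def frozenProfile (lam : ℝ → ℝ) (Δ : ℕ) (r : ℕ → ℝ) (c T t : ℝ) : ℝ :=
  if t ≤ T then lam t + c * omegaAux lam Δ r t else lam T + c * omegaAux lam Δ r T

theorem omegaAux_zero (lam : ℝ → ℝ) (Δ : ℕ) (r : ℕ → ℝ) : omegaAux lam Δ r 0 = 0 := by
  simp [omegaAux, alphaAux, betaAux]

namespace IsLamSolution

variable {lam : ℝ → ℝ} {Δ : ℕ} {r : ℕ → ℝ}

theorem hasDerivAt (hl : IsLamSolution lam) (t : ℝ) : HasDerivAt lam (deriv lam t) t :=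
  (hl.differentiable t).hasDerivAt

theorem continuous (hl : IsLamSolution lam) : Continuous lam :=
  hl.differentiable.continuous

theorem nonneg (hl : IsLamSolution lam) {t : ℝ} (ht : 0 ≤ t) : 0 ≤ lam t := by
  -- `-λ` cannot cross the barrier `0` upwards: where `λ = 0` we have `λ' = 1`.
  have := image_le_of_deriv_right_lt_deriv_boundary (f := fun t => -lam t)
    (f' := fun t => -deriv lam t) (B := fun _ => 0) (B' := fun _ => 0)
    hl.continuous.neg.continuousOn (fun x _ => (hl.hasDerivAt x).neg.hasDerivWithinAt)
    (by simp [hl.map_zero]) (fun _ => hasDerivAt_const _ _)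
    (fun x hx hx0 => by simp [hl.deriv_eq x hx.1, neg_eq_zero.1 hx0]) ⟨ht, le_rfl⟩
  linarith

theorem deriv_pos (hl : IsLamSolution lam) {t : ℝ} (ht : 0 ≤ t) : 0 < deriv lam t := by
  have := hl.nonneg ht
  rw [hl.deriv_eq t ht]
  positivity

theorem deriv_le_one (hl : IsLamSolution lam) {t : ℝ} (ht : 0 ≤ t) : deriv lam t ≤ 1 := by
  rw [hl.deriv_eq t ht, exp_neg, inv_mul_le_iff₀ (exp_pos _), mul_one, add_comm]
  exact add_one_le_exp _

theorem exp_mul_deriv (hl : IsLamSolution lam) {t : ℝ} (ht : 0 ≤ t) :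
    exp (lam t) * deriv lam t = 1 + lam t := by
  rw [hl.deriv_eq t ht, ← mul_assoc, ← exp_add, add_neg_cancel, exp_zero, one_mul]

theorem monotoneOn (hl : IsLamSolution lam) : MonotoneOn lam (Ici 0) := fun x hx y _ hxy => by
  have := sub_le_sub_of_hasDerivAt_le hxy continuousOn_const hl.continuous.continuousOn
    (fun t _ => hasDerivAt_const t 0) (fun t _ => hl.hasDerivAt t)
    (fun t ht => (hl.deriv_pos (le_trans hx ht.1.le)).le)
  linarith

theorem le_self (hl : IsLamSolution lam) {t : ℝ} (ht : 0 ≤ t) : lam t ≤ t := by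
  have := sub_le_sub_of_hasDerivAt_le ht hl.continuous.continuousOn continuousOn_id
    (fun s _ => hl.hasDerivAt s) (fun s _ => hasDerivAt_id s)
    (fun s hs => hl.deriv_le_one hs.1.le)
  simpa [hl.map_zero] using this

theorem one_add_le_exp (hl : IsLamSolution lam) {t : ℝ} (ht : 0 ≤ t) :
    1 + t ≤ exp (lam t) := by
  have := sub_le_sub_of_hasDerivAt_le ht continuousOn_id
    (hl.continuous.rexp.continuousOn) (fun s _ => hasDerivAt_id s)
    (fun s _ => (hl.hasDerivAt s).exp)
    (fun s hs => by rw [hl.exp_mul_deriv hs.1.le]; linarith [hl.nonneg hs.1.le])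
  rw [hl.map_zero, exp_zero, id, id, sub_zero] at this
  linarith

theorem exp_le_sq (hl : IsLamSolution lam) {t : ℝ} (ht : 0 ≤ t) :
    exp (lam t) ≤ (1 + t) ^ 2 := by
  have := sub_le_sub_of_hasDerivAt_le ht (hl.continuous.rexp.continuousOn)
    (by fun_prop : Continuous fun s : ℝ => (1 + s) ^ 2).continuousOn
    (fun s _ => (hl.hasDerivAt s).exp)
    (fun s _ => by simpa using ((hasDerivAt_id s).const_add 1).fun_pow 2)
    (fun s hs => by rw [hl.exp_mul_deriv hs.1.le]; linarith [hl.le_self hs.1.le, hs.1])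
  rw [hl.map_zero, exp_zero] at this
  linarith

theorem exp_le_mul (hl : IsLamSolution lam) {t : ℝ} (ht : 0 ≤ t) :
    exp (lam t) ≤ (1 + t) * (1 + lam t) := by
  have hpos : ∀ s ∈ Icc 0 t, 0 < 1 + lam s := fun s hs => by linarith [hl.nonneg hs.1]
  have := sub_le_sub_of_hasDerivAt_le (f := fun s => exp (lam s) / (1 + lam s))
    (f' := fun s => (exp (lam s) * deriv lam s * (1 + lam s) - exp (lam s) * deriv lam s) /
      (1 + lam s) ^ 2) (g := fun s => 1 + s) (g' := fun _ => 1) ht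
    (ContinuousOn.div (hl.continuous.rexp.continuousOn)
      (continuous_const.add hl.continuous).continuousOn fun s hs => (hpos s hs).ne')
    (by fun_prop) (fun s hs => ((hl.hasDerivAt s).exp).div ((hl.hasDerivAt s).const_add 1)
      (hpos s (Ioo_subset_Icc_self hs)).ne')
    (fun s _ => by simpa using (hasDerivAt_id s).const_add 1)
    (fun s hs => by
      have h0 := hl.nonneg hs.1.le
      rw [div_le_one (by positivity), hl.exp_mul_deriv hs.1.le]
      nlinarith)
  rw [hl.map_zero, exp_zero, add_zero, div_one] at this
  rw [← div_le_iff₀ (hpos t ⟨ht, le_rfl⟩)]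
  linarith

theorem log_one_add_le (hl : IsLamSolution lam) {t : ℝ} (ht : 0 ≤ t) : log (1 + t) ≤ lam t :=
  (log_le_iff_le_exp (by linarith)).2 (hl.one_add_le_exp ht)

theorem le_two_mul_log (hl : IsLamSolution lam) {t : ℝ} (ht : 0 ≤ t) :
    lam t ≤ 2 * log (1 + t) := by
  have hlog : log ((1 + t) ^ 2) = 2 * log (1 + t) := by rw [log_pow]; norm_num
  rw [← hlog, le_log_iff_exp_le (by positivity)]
  exact hl.exp_le_sq ht

theorem pos (hl : IsLamSolution lam) {t : ℝ} (ht : 0 < t) : 0 < lam t :=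
  (log_pos (by linarith)).trans_le (hl.log_one_add_le ht.le)

theorem inv_le_deriv (hl : IsLamSolution lam) {t : ℝ} (ht : 0 ≤ t) :
    (1 + t)⁻¹ ≤ deriv lam t := by
  rw [hl.deriv_eq t ht, exp_neg, inv_mul_eq_div, le_div_iff₀ (exp_pos _),
    inv_mul_le_iff₀ (by linarith)]
  exact hl.exp_le_mul ht

theorem one_add_mul_deriv_le (hl : IsLamSolution lam) {t : ℝ} (ht : 0 ≤ t) :
    (1 + t) * deriv lam t ≤ 1 + 2 * log (1 + t) := by
  have hexp : (1 + t) * exp (-lam t) ≤ 1 := by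
    rw [exp_neg, ← div_eq_mul_inv, div_le_one (exp_pos _)]
    exact hl.one_add_le_exp ht
  calc (1 + t) * deriv lam t = (1 + t) * exp (-lam t) * (1 + lam t) := by
        rw [hl.deriv_eq t ht, mul_assoc]
    _ ≤ 1 * (1 + lam t) := by gcongr; linarith [hl.nonneg ht]
    _ ≤ 1 + 2 * log (1 + t) := by linarith [hl.le_two_mul_log ht]

theorem exp_neg_three_halves_le (hl : IsLamSolution lam) {t : ℝ} (ht : 0 ≤ t) :
    exp (-(3 / 2) * lam t) ≤ ((1 + t) * √(1 + t))⁻¹ := by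
  have hsqrt : √(1 + t) ≤ exp (lam t / 2) := by
    rw [exp_half]
    exact Real.sqrt_le_sqrt (hl.one_add_le_exp ht)
  rw [show -(3 / 2) * lam t = -(lam t + lam t / 2) by ring, exp_neg, exp_add]
  exact inv_anti₀ (by positivity) (mul_le_mul (hl.one_add_le_exp ht) hsqrt (by positivity)
    (exp_pos _).le)

theorem hasDerivAt_deriv (hl : IsLamSolution lam) {t : ℝ} (ht : 0 < t) :
    HasDerivAt (deriv lam) (-(lam t * exp (-lam t)) * deriv lam t) t := by
  have hE : HasDerivAt (fun s => exp (-lam s) * (1 + lam s))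
      (-(lam t * exp (-lam t)) * deriv lam t) t := by
    refine (((hl.hasDerivAt t).neg.exp).mul ((hl.hasDerivAt t).const_add 1)).congr_deriv ?_
    simp only [Pi.neg_apply]
    ring
  refine hE.congr_of_eventuallyEq ?_
  filter_upwards [Ioi_mem_nhds ht] with s hs
  exact hl.deriv_eq s (le_of_lt hs)

theorem continuousOn_deriv (hl : IsLamSolution lam) : ContinuousOn (deriv lam) (Ioi 0) :=
  fun _ ht => (hl.hasDerivAt_deriv ht).continuousAt.continuousWithinAt

theorem hasDerivAt_LamErr (hl : IsLamSolution lam) {t : ℝ} (ht : 0 < t) :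
    HasDerivAt (LamErr lam Δ r)
      (-(lam t * exp (-lam t)) * deriv lam t * lamErrPrimitive Δ r (lam t) +
        deriv lam t * (lamErrIntegrand Δ r (lam t) * deriv lam t)) t :=
  (hl.hasDerivAt_deriv ht).mul
    ((hasDerivAt_lamErrPrimitive (by linarith [hl.nonneg ht.le])).comp t (hl.hasDerivAt t))

theorem Herr_eq_herrProfile (hl : IsLamSolution lam) {t : ℝ} (ht : 0 < t) :
    Herr lam Δ r t = herrProfile Δ r (lam t) := by
  have hexp : exp (-2 * lam t) = exp (-lam t) * exp (-lam t) := by rw [← exp_add]; ring_nf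
  have hLamErr : LamErr lam Δ r t = deriv lam t * lamErrPrimitive Δ r (lam t) := rfl
  rw [Herr, (hl.hasDerivAt_LamErr ht).deriv, hLamErr, hl.deriv_eq t ht.le, herrProfile, hexp]
  unfold coeffPoly
  ring

theorem continuousOn_Herr (hl : IsLamSolution lam) :
    ContinuousOn (Herr lam Δ r) (Ioi 0) :=
  (continuousOn_herrProfile.comp hl.continuous.continuousOn fun _ ht =>
    show -1 < lam _ by linarith [hl.nonneg (le_of_lt ht)]).congr
      fun _ ht => hl.Herr_eq_herrProfile ht

theorem abs_Herr_mul_sq_le (hl : IsLamSolution lam) (hr : memR Δ r) {t : ℝ} (ht : 0 < t) :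
    |Herr lam Δ r t| * (1 + lam t) ^ 2 ≤ herrConst Δ * ((1 + t) * √(1 + t))⁻¹ := by
  rw [hl.Herr_eq_herrProfile ht]
  exact (abs_herrProfile_mul_sq_le hr (hl.nonneg ht.le)).trans
    (mul_le_mul_of_nonneg_left (hl.exp_neg_three_halves_le ht.le) (herrConst_nonneg Δ))

theorem abs_uIntegrand_le_half (hl : IsLamSolution lam) {s : ℝ} (hs : 0 ≤ s) :
    |uIntegrand lam s| ≤ 1 / 2 := by
  rcases (hl.nonneg hs).eq_or_lt with h | h
  · simp [uIntegrand, ← h]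
  have hsq : 0 < lam s ^ 2 := by positivity
  rw [uIntegrand, abs_div, abs_of_pos hsq, div_le_iff₀ hsq,
    abs_of_nonpos (by linarith [hl.deriv_le_one hs]), hl.deriv_eq s hs]
  linarith [one_sub_exp_neg_mul_le h.le]

theorem abs_uIntegrand_le_inv_sq (hl : IsLamSolution lam) {s : ℝ} (hs : 0 < s) :
    |uIntegrand lam s| ≤ (lam s ^ 2)⁻¹ := by
  have hsq : 0 < lam s ^ 2 := pow_pos (hl.pos hs) 2
  rw [uIntegrand, abs_div, abs_of_pos hsq, div_eq_mul_inv]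
  refine mul_le_of_le_one_left (inv_nonneg.2 hsq.le) ?_
  rw [abs_le]
  constructor <;> linarith [hl.deriv_pos hs.le, hl.deriv_le_one hs.le]

theorem continuousOn_uIntegrand (hl : IsLamSolution lam) :
    ContinuousOn (uIntegrand lam) (Ioi 0) :=
  (hl.continuousOn_deriv.sub continuousOn_const).div (hl.continuous.pow 2).continuousOn
    fun _ hs => (pow_pos (hl.pos hs) 2).ne'

theorem intervalIntegrable_uIntegrand (hl : IsLamSolution lam) {a b : ℝ} (ha : 0 ≤ a)
    (hab : a ≤ b) : IntervalIntegrable (uIntegrand lam) volume a b :=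
  intervalIntegrable_of_continuousOn_Ioc_of_abs_le hab
    (hl.continuousOn_uIntegrand.mono fun _ hs => ha.trans_lt hs.1)
    fun _ hs => hl.abs_uIntegrand_le_half (ha.trans hs.1.le)

theorem hasDerivAt_uIntegral (hl : IsLamSolution lam) {t : ℝ} (ht : 0 < t) :
    HasDerivAt (uIntegral lam) (uIntegrand lam t) t :=
  hasDerivAt_integral_of_continuousOn isOpen_Ioi hl.continuousOn_uIntegrand ht
    (hl.intervalIntegrable_uIntegrand le_rfl ht.le)

theorem abs_uIntegral_le (hl : IsLamSolution lam) {t : ℝ} (ht : 0 ≤ t) :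
    |uIntegral lam t| ≤ t / 2 := by
  calc |uIntegral lam t| = ‖∫ s in (0 : ℝ)..t, uIntegrand lam s‖ := rfl
    _ ≤ 1 / 2 * |t - 0| := intervalIntegral.norm_integral_le_of_norm_le_const fun s hs =>
        hl.abs_uIntegrand_le_half (by rw [uIoc_of_le ht] at hs; exact hs.1.le)
    _ = t / 2 := by rw [sub_zero, abs_of_nonneg ht]; ring

/-- On `[√(1+t) - 1, t]` we already have `λ ≥ log(1+t)/2`, so there the integrand is
`O(1/log²(1+t))` rather than `O(1)`. -/
theorem abs_uIntegral_le_sqrt_add (hl : IsLamSolution lam) {t : ℝ} (ht : 0 < t) :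
    |uIntegral lam t| ≤ √(1 + t) + 4 * (1 + t) / log (1 + t) ^ 2 := by
  set L := log (1 + t)
  set τ := √(1 + t) - 1
  have hL : 0 < L := log_pos (by linarith)
  have hτ0 : 0 ≤ τ := by simp only [τ, sub_nonneg, one_le_sqrt]; linarith
  have hτt : τ ≤ t := by
    have : √(1 + t) ≤ 1 + t := sqrt_le_self_iff.2 (Or.inr (by linarith))
    simp only [τ]; linarith
  have hlogτ : log (1 + τ) = L / 2 := by
    simp only [τ, add_sub_cancel, log_sqrt (by linarith : (0 : ℝ) ≤ 1 + t), L]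
  have hsplit : uIntegral lam t = uIntegral lam τ + ∫ s in τ..t, uIntegrand lam s :=
    (integral_add_adjacent_intervals (hl.intervalIntegrable_uIntegrand le_rfl hτ0)
      (hl.intervalIntegrable_uIntegrand hτ0 hτt)).symm
  have htail : ‖∫ s in τ..t, uIntegrand lam s‖ ≤ 4 / L ^ 2 * |t - τ| := by
    refine intervalIntegral.norm_integral_le_of_norm_le_const fun s hs => ?_
    rw [uIoc_of_le hτt] at hs
    have hs0 : 0 < s := hτ0.trans_lt hs.1
    have hlam : L / 2 ≤ lam s := hlogτ ▸ (hl.log_one_add_le hτ0).trans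
      (hl.monotoneOn hτ0 hs0.le hs.1.le)
    calc ‖uIntegrand lam s‖ ≤ (lam s ^ 2)⁻¹ := hl.abs_uIntegrand_le_inv_sq hs0
      _ ≤ ((L / 2) ^ 2)⁻¹ := inv_anti₀ (by positivity) (pow_le_pow_left₀ (by positivity) hlam 2)
      _ = 4 / L ^ 2 := by field_simp; norm_num
  have hlen : 4 / L ^ 2 * |t - τ| ≤ 4 * (1 + t) / L ^ 2 := by
    rw [abs_of_nonneg (by linarith), div_mul_eq_mul_div]
    gcongr
    linarith
  rw [hsplit]
  rw [Real.norm_eq_abs] at htail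
  linarith [abs_add_le (uIntegral lam τ) (∫ s in τ..t, uIntegrand lam s),
    hl.abs_uIntegral_le hτ0]

theorem abs_uAux_le (hl : IsLamSolution lam) {t : ℝ} (ht : 0 ≤ t) :
    |uAux lam t| ≤ (1 + t) * (1 + lam t) := by
  have h0 := hl.nonneg ht
  have hprod : |lam t * uIntegral lam t| ≤ lam t * (t / 2) := by
    rw [abs_mul, abs_of_nonneg h0]
    exact mul_le_mul_of_nonneg_left (hl.abs_uIntegral_le ht) h0
  calc |uAux lam t| = |1 + lam t * uIntegral lam t| := rfl
    _ ≤ 1 + lam t * (t / 2) := (abs_add_le _ _).trans (by rw [abs_one]; linarith)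
    _ ≤ (1 + t) * (1 + lam t) := by nlinarith

theorem hasDerivAt_uAux (hl : IsLamSolution lam) {t : ℝ} (ht : 0 < t) :
    HasDerivAt (uAux lam) (uDeriv lam t) t :=
  ((hl.hasDerivAt t).mul (hl.hasDerivAt_uIntegral ht)).const_add 1

theorem continuousOn_uAux (hl : IsLamSolution lam) {T : ℝ} (hT : 0 ≤ T) :
    ContinuousOn (uAux lam) (Icc 0 T) :=
  continuousOn_const.add (hl.continuous.continuousOn.mul
    (continuousOn_primitive_Icc_of_intervalIntegrable hT
      (hl.intervalIntegrable_uIntegrand le_rfl hT)))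

theorem abs_uDeriv_le (hl : IsLamSolution lam) {t : ℝ} (ht : 0 < t) : |uDeriv lam t| ≤ t := by
  have h1 : |deriv lam t * uIntegral lam t| ≤ t / 2 := by
    rw [abs_mul, abs_of_pos (hl.deriv_pos ht.le)]
    simpa using mul_le_mul (hl.deriv_le_one ht.le) (hl.abs_uIntegral_le ht.le) (abs_nonneg _)
      zero_le_one
  have h2 : |lam t * uIntegrand lam t| ≤ t / 2 := by
    rw [abs_mul, abs_of_nonneg (hl.nonneg ht.le)]
    nlinarith [hl.le_self ht.le, hl.nonneg ht.le, hl.abs_uIntegrand_le_half ht.le,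
      abs_nonneg (uIntegrand lam t)]
  exact (abs_add_le _ _).trans (by linarith)

theorem abs_uDeriv_le_sqrt_mul_deriv_add (hl : IsLamSolution lam) {t : ℝ} (ht : 0 < t) :
    |uDeriv lam t| ≤ √(1 + t) * deriv lam t + 4 * ((1 + 2 * log (1 + t)) / log (1 + t) ^ 2) +
      (log (1 + t))⁻¹ := by
  set L := log (1 + t)
  have hL : 0 < L := log_pos (by linarith)
  have hd := hl.deriv_pos ht.le
  have h1 : |deriv lam t * uIntegral lam t| ≤
      √(1 + t) * deriv lam t + 4 * ((1 + 2 * L) / L ^ 2) := by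
    rw [abs_mul, abs_of_pos hd]
    calc deriv lam t * |uIntegral lam t| ≤ deriv lam t * (√(1 + t) + 4 * (1 + t) / L ^ 2) :=
          mul_le_mul_of_nonneg_left (hl.abs_uIntegral_le_sqrt_add ht) hd.le
      _ = √(1 + t) * deriv lam t + 4 * ((1 + t) * deriv lam t / L ^ 2) := by ring
      _ ≤ √(1 + t) * deriv lam t + 4 * ((1 + 2 * L) / L ^ 2) := by
          gcongr
          exact hl.one_add_mul_deriv_le ht.le
  have h2 : |lam t * uIntegrand lam t| ≤ L⁻¹ := by
    have hlam := hl.pos ht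
    rw [abs_mul, abs_of_pos hlam]
    calc lam t * |uIntegrand lam t| ≤ lam t * (lam t ^ 2)⁻¹ :=
          mul_le_mul_of_nonneg_left (hl.abs_uIntegrand_le_inv_sq ht) hlam.le
      _ = (lam t)⁻¹ := by field_simp
      _ ≤ L⁻¹ := inv_anti₀ hL (hl.log_one_add_le ht.le)
  exact (abs_add_le _ _).trans (add_le_add h1 h2)

theorem abs_uAux_mul_Herr_mul_le (hl : IsLamSolution lam) (hr : memR Δ r) {t : ℝ}
    (ht : 0 < t) : |uAux lam t * Herr lam Δ r t * lam t| ≤ herrConst Δ * (√(1 + t))⁻¹ := by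
  have h0 := hl.nonneg ht.le
  have hpos : 0 < √(1 + t) := Real.sqrt_pos.2 (by linarith)
  have hH := hl.abs_Herr_mul_sq_le hr ht
  calc |uAux lam t * Herr lam Δ r t * lam t|
      ≤ (1 + t) * (1 + lam t) * |Herr lam Δ r t| * lam t := by
        rw [abs_mul, abs_mul, abs_of_nonneg h0]
        gcongr
        exact hl.abs_uAux_le ht.le
    _ ≤ (1 + t) * (|Herr lam Δ r t| * (1 + lam t) ^ 2) := by
        have := mul_nonneg (mul_nonneg (by linarith : 0 ≤ 1 + t) (abs_nonneg (Herr lam Δ r t)))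
          (by linarith : 0 ≤ 1 + lam t)
        nlinarith
    _ ≤ (1 + t) * (herrConst Δ * ((1 + t) * √(1 + t))⁻¹) := by gcongr
    _ = herrConst Δ * (√(1 + t))⁻¹ := by field_simp

theorem abs_Herr_mul_lam_sq_le (hl : IsLamSolution lam) (hr : memR Δ r) {t : ℝ} (ht : 0 < t) :
    |Herr lam Δ r t * lam t ^ 2| ≤ herrConst Δ * ((1 + t) * √(1 + t))⁻¹ := by
  refine le_trans ?_ (hl.abs_Herr_mul_sq_le hr ht)
  rw [abs_mul, abs_sq]
  gcongr
  · exact hl.nonneg ht.le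
  · linarith

theorem continuousOn_alphaIntegrand (hl : IsLamSolution lam) :
    ContinuousOn (fun s => uAux lam s * Herr lam Δ r s * lam s) (Ioi 0) :=
  ((HasDerivAt.continuousOn fun _ hs => hl.hasDerivAt_uAux hs).mul
    hl.continuousOn_Herr).mul hl.continuous.continuousOn

theorem continuousOn_betaIntegrand (hl : IsLamSolution lam) :
    ContinuousOn (fun s => Herr lam Δ r s * lam s ^ 2) (Ioi 0) :=
  hl.continuousOn_Herr.mul (hl.continuous.pow 2).continuousOn

theorem intervalIntegrable_alphaIntegrand (hl : IsLamSolution lam) (hr : memR Δ r) {t : ℝ}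
    (ht : 0 ≤ t) :
    IntervalIntegrable (fun s => uAux lam s * Herr lam Δ r s * lam s) volume 0 t :=
  intervalIntegrable_of_continuousOn_Ioc_of_abs_le ht (hl.continuousOn_alphaIntegrand.mono
    fun _ hs => hs.1) fun s hs => (hl.abs_uAux_mul_Herr_mul_le hr hs.1).trans
      (mul_le_of_le_one_right (herrConst_nonneg Δ) (inv_le_one_of_one_le₀
        (one_le_sqrt.2 (by linarith [hs.1]))))

theorem intervalIntegrable_betaIntegrand (hl : IsLamSolution lam) (hr : memR Δ r) {t : ℝ}
    (ht : 0 ≤ t) : IntervalIntegrable (fun s => Herr lam Δ r s * lam s ^ 2) volume 0 t :=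
  intervalIntegrable_of_continuousOn_Ioc_of_abs_le ht (hl.continuousOn_betaIntegrand.mono
    fun _ hs => hs.1) fun s hs => (hl.abs_Herr_mul_lam_sq_le hr hs.1).trans
      (mul_le_of_le_one_right (herrConst_nonneg Δ) (inv_le_one_of_one_le₀
        (one_le_mul_of_one_le_of_one_le (by linarith [hs.1])
          (one_le_sqrt.2 (by linarith [hs.1])))))

theorem hasDerivAt_alphaAux (hl : IsLamSolution lam) (hr : memR Δ r) {t : ℝ} (ht : 0 < t) :
    HasDerivAt (alphaAux lam Δ r) (-(uAux lam t * Herr lam Δ r t * lam t)) t :=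
  (hasDerivAt_integral_of_continuousOn isOpen_Ioi hl.continuousOn_alphaIntegrand ht
    (hl.intervalIntegrable_alphaIntegrand hr ht.le)).neg

theorem hasDerivAt_betaAux (hl : IsLamSolution lam) (hr : memR Δ r) {t : ℝ} (ht : 0 < t) :
    HasDerivAt (betaAux lam Δ r) (Herr lam Δ r t * lam t ^ 2) t :=
  hasDerivAt_integral_of_continuousOn isOpen_Ioi hl.continuousOn_betaIntegrand ht
    (hl.intervalIntegrable_betaIntegrand hr ht.le)

theorem abs_alphaAux_le (hl : IsLamSolution lam) (hr : memR Δ r) {t : ℝ} (ht : 0 ≤ t) :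
    |alphaAux lam Δ r t| ≤ 2 * herrConst Δ * √(1 + t) := by
  have hC := herrConst_nonneg Δ
  have hbound := abs_sub_le_of_abs_hasDerivAt_le (f := alphaAux lam Δ r) ht
    ((continuousOn_primitive_Icc_of_intervalIntegrable ht
      (hl.intervalIntegrable_alphaIntegrand hr ht)).neg)
    (HasDerivAt.continuousOn fun s hs =>
      (hasDerivAt_sqrt_one_add (by linarith [hs.1] : -1 < s)).const_mul (2 * herrConst Δ))
    (fun s hs => hl.hasDerivAt_alphaAux hr hs.1)
    (fun s hs => (hasDerivAt_sqrt_one_add (by linarith [hs.1] : -1 < s)).const_mul _)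
    fun s hs => by
      rw [abs_neg]
      refine (hl.abs_uAux_mul_Herr_mul_le hr hs.1).trans (le_of_eq ?_)
      field_simp
  rw [show alphaAux lam Δ r 0 = 0 by simp [alphaAux], sub_zero, add_zero, sqrt_one] at hbound
  linarith

theorem abs_betaAux_le (hl : IsLamSolution lam) (hr : memR Δ r) {t : ℝ} (ht : 0 ≤ t) :
    |betaAux lam Δ r t| ≤ 2 * herrConst Δ := by
  have hC := herrConst_nonneg Δ
  have hbound := abs_sub_le_of_abs_hasDerivAt_le (f := betaAux lam Δ r) ht
    (continuousOn_primitive_Icc_of_intervalIntegrable ht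
      (hl.intervalIntegrable_betaIntegrand hr ht))
    (HasDerivAt.continuousOn fun s hs =>
      (hasDerivAt_inv_sqrt_one_add (by linarith [hs.1] : -1 < s)).const_mul (-(2 * herrConst Δ)))
    (fun s hs => hl.hasDerivAt_betaAux hr hs.1)
    (fun s hs => (hasDerivAt_inv_sqrt_one_add (by linarith [hs.1] : -1 < s)).const_mul _)
    fun s hs => by
      refine (hl.abs_Herr_mul_lam_sq_le hr hs.1).trans (le_of_eq ?_)
      field_simp
  rw [show betaAux lam Δ r 0 = 0 by simp [betaAux], sub_zero, add_zero, sqrt_one, inv_one]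
    at hbound
  have : 0 ≤ (√(1 + t))⁻¹ := by positivity
  nlinarith

theorem hasDerivAt_omegaAux (hl : IsLamSolution lam) (hr : memR Δ r) {t : ℝ} (ht : 0 < t) :
    HasDerivAt (omegaAux lam Δ r) (omegaDeriv lam Δ r t) t := by
  -- variation of parameters: `α' λ + β' u = -u H λ · λ + H λ² · u = 0`
  refine (((hl.hasDerivAt_alphaAux hr ht).mul (hl.hasDerivAt t)).add
    ((hl.hasDerivAt_betaAux hr ht).mul (hl.hasDerivAt_uAux ht))).congr_deriv ?_
  unfold omegaDeriv
  ring

theorem continuousOn_omegaAux (hl : IsLamSolution lam) (hr : memR Δ r) {T : ℝ} (hT : 0 ≤ T) :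
    ContinuousOn (omegaAux lam Δ r) (Icc 0 T) :=
  ((continuousOn_primitive_Icc_of_intervalIntegrable hT
      (hl.intervalIntegrable_alphaIntegrand hr hT)).neg.mul hl.continuous.continuousOn).add
    ((continuousOn_primitive_Icc_of_intervalIntegrable hT
      (hl.intervalIntegrable_betaIntegrand hr hT)).mul (hl.continuousOn_uAux hT))

theorem abs_omegaDeriv_le (hl : IsLamSolution lam) (hr : memR Δ r) {t : ℝ} (ht : 0 < t) :
    |omegaDeriv lam Δ r t| ≤ 2 * herrConst Δ * omegaDerivBound lam t := by
  have hd := hl.deriv_pos ht.le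
  calc |omegaDeriv lam Δ r t|
      ≤ |alphaAux lam Δ r t| * deriv lam t + |betaAux lam Δ r t| * |uDeriv lam t| := by
        refine (abs_add_le _ _).trans ?_
        rw [abs_mul, abs_mul, abs_of_pos hd]
    _ ≤ 2 * herrConst Δ * √(1 + t) * deriv lam t + 2 * herrConst Δ * |uDeriv lam t| := by
        gcongr
        exacts [hl.abs_alphaAux_le hr ht.le, hl.abs_betaAux_le hr ht.le]
    _ = 2 * herrConst Δ * omegaDerivBound lam t := by unfold omegaDerivBound; ring

theorem omegaDerivBound_le (hl : IsLamSolution lam) {t : ℝ} (ht : 0 < t) :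
    omegaDerivBound lam t ≤ √(1 + t) + t :=
  add_le_add (mul_le_of_le_one_right (sqrt_nonneg _) (hl.deriv_le_one ht.le))
    (hl.abs_uDeriv_le ht)

theorem sqrt_mul_deriv_le (hl : IsLamSolution lam) {t : ℝ} (ht : 0 ≤ t) :
    √(1 + t) * deriv lam t ≤ (1 + 2 * log (1 + t)) / √(1 + t) := by
  have hS : 0 < √(1 + t) := sqrt_pos.2 (by linarith)
  rw [le_div_iff₀ hS, mul_right_comm, mul_self_sqrt (by linarith)]
  exact hl.one_add_mul_deriv_le ht

theorem tendsto_omegaDerivBound (hl : IsLamSolution lam) :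
    Tendsto (omegaDerivBound lam) atTop (𝓝 0) := by
  have hshift : Tendsto (fun t : ℝ => 1 + t) atTop atTop :=
    tendsto_atTop_add_const_left _ 1 tendsto_id
  have hmajorant := (((tendsto_one_add_two_mul_log_div_sqrt.comp hshift).const_mul 2).add
    (tendsto_four_mul_one_add_two_mul_div_sq_add_inv.comp (tendsto_log_atTop.comp hshift)))
  rw [mul_zero, add_zero] at hmajorant
  refine tendsto_of_tendsto_of_tendsto_of_le_of_le' tendsto_const_nhds hmajorant ?_ ?_ <;>
    filter_upwards [eventually_gt_atTop 0] with t ht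
  · exact add_nonneg (mul_nonneg (sqrt_nonneg _) (hl.deriv_pos ht.le).le) (abs_nonneg _)
  · have := hl.sqrt_mul_deriv_le ht.le
    have := hl.abs_uDeriv_le_sqrt_mul_deriv_add ht
    simp only [Function.comp, omegaDerivBound]
    linarith

theorem frozenProfile_zero (hl : IsLamSolution lam) {c T : ℝ} (hT : 0 ≤ T) :
    frozenProfile lam Δ r c T 0 = 0 := by
  simp [frozenProfile, hT, hl.map_zero, omegaAux_zero]

theorem monotoneOn_add_mul_omegaAux (hl : IsLamSolution lam) (hr : memR Δ r) {c T : ℝ}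
    (hc : 0 ≤ c) (hT : 0 ≤ T)
    (hsmall : ∀ t ∈ Ioo 0 T, c * |omegaDeriv lam Δ r t| ≤ (1 + t)⁻¹) :
    MonotoneOn (fun t => lam t + c * omegaAux lam Δ r t) (Icc 0 T) := by
  have hcont : ContinuousOn (fun t => lam t + c * omegaAux lam Δ r t) (Icc 0 T) :=
    hl.continuous.continuousOn.add (continuousOn_const.mul (hl.continuousOn_omegaAux hr hT))
  refine monotoneOn_of_hasDerivWithinAt_nonneg
    (f' := fun t => deriv lam t + c * omegaDeriv lam Δ r t) (convex_Icc 0 T) hcont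
    (fun t ht => ?_) (fun t ht => ?_) <;> rw [interior_Icc] at ht
  · exact ((hl.hasDerivAt t).add ((hl.hasDerivAt_omegaAux hr ht.1).const_mul c)).hasDerivWithinAt
  · have := mul_le_mul_of_nonneg_left (neg_abs_le (omegaDeriv lam Δ r t)) hc
    linarith [hl.inv_le_deriv ht.1.le, hsmall t ht]

theorem exists_mul_abs_omegaDeriv_le (hl : IsLamSolution lam) :
    ∃ c₀ > 0, ∀ r, memR Δ r → ∀ c t : ℝ, 0 ≤ c → c < c₀ → c * t ≤ 1 → 0 < t →
      c * |omegaDeriv lam Δ r t| ≤ (1 + t)⁻¹ := by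
  set C := herrConst Δ
  have hC : 0 ≤ C := herrConst_nonneg Δ
  obtain ⟨T₀, hT₀⟩ := eventually_atTop.1 <|
    (hl.tendsto_omegaDerivBound.const_mul (2 * C)).eventually
      (ge_mem_nhds (by rw [mul_zero]; norm_num : 2 * C * 0 < 1 / 2))
  set T₁ := max T₀ 0
  set M := 2 * C * (√(1 + T₁) + T₁)
  have hM : 0 ≤ M := by positivity
  refine ⟨min 1 ((1 + T₁) * (M + 1))⁻¹, by positivity, fun r hr c t hc hcc₀ hct ht => ?_⟩
  have hc1 : c ≤ 1 := hcc₀.le.trans (min_le_left _ _)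
  rw [← mul_one (1 + t)⁻¹, le_inv_mul_iff₀ (by linarith)]
  have hω := hl.abs_omegaDeriv_le hr ht
  rcases le_or_gt t T₁ with htT | htT
  · have hbound : |omegaDeriv lam Δ r t| ≤ M :=
      hω.trans (mul_le_mul_of_nonneg_left ((hl.omegaDerivBound_le ht).trans
        (add_le_add (sqrt_le_sqrt (by linarith)) htT)) (by positivity))
    have hc₀ : c * ((1 + T₁) * (M + 1)) ≤ 1 := by
      have h := mul_le_mul_of_nonneg_right (hcc₀.le.trans (min_le_right _ _))
        (by positivity : 0 ≤ (1 + T₁) * (M + 1))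
      rwa [inv_mul_cancel₀ (by positivity)] at h
    calc (1 + t) * (c * |omegaDeriv lam Δ r t|) ≤ (1 + T₁) * (c * (M + 1)) := by
          gcongr; linarith
      _ ≤ 1 := by linarith
  · have hhalf : |omegaDeriv lam Δ r t| ≤ 1 / 2 := hω.trans (hT₀ t (le_of_max_le_left htT.le))
    nlinarith [abs_nonneg (omegaDeriv lam Δ r t)]

theorem exists_monotoneOn_frozenProfile (hl : IsLamSolution lam) :
    ∃ c₀ > 0, ∀ r, memR Δ r → ∀ c T : ℝ, 0 ≤ c → c < c₀ → 0 ≤ T → c * T ≤ 1 →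
      MonotoneOn (frozenProfile lam Δ r c T) (Ici 0) := by
  obtain ⟨c₀, hc₀, hsmall⟩ := hl.exists_mul_abs_omegaDeriv_le (Δ := Δ)
  refine ⟨c₀, hc₀, fun r hr c T hc hcc₀ hT hcT => ?_⟩
  exact (hl.monotoneOn_add_mul_omegaAux hr hc hT fun t ht => hsmall r hr c t hc hcc₀
    ((mul_le_mul_of_nonneg_left ht.2.le hc).trans hcT) ht.1).ite_le_const hT

end IsLamSolution

theorem w_approx_properties_general (Δ : ℕ) (lam : ℝ → ℝ)
    (hdiff : Differentiable ℝ lam) (h0 : lam 0 = 0)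
    (hode : ∀ t : ℝ, 0 ≤ t → deriv lam t = Real.exp (-lam t) * (1 + lam t))
    (δ : ℝ) (hδ0 : 0 < δ) (hδ1 : δ < 1) :
    (∀ ε : ℝ, 0 < ε → ε ≤ 1 → ∀ r : ℕ → ℝ, memR Δ r →
      wMinus lam Δ r ε δ 0 = 0 ∧ wPlus lam Δ r ε δ 0 = 0) ∧
    (∃ ε₀ : ℝ, 0 < ε₀ ∧ ∀ ε : ℝ, 0 < ε → ε < ε₀ → ∀ r : ℕ → ℝ, memR Δ r →
      MonotoneOn (wMinus lam Δ r ε δ) (Set.Ici 0) ∧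
      MonotoneOn (wPlus lam Δ r ε δ) (Set.Ici 0)) := by
  have hl : IsLamSolution lam := ⟨hdiff, h0, hode⟩
  have hwMinus : ∀ r ε, wMinus lam Δ r ε δ =
      frozenProfile lam Δ r ((1 + δ / 2) * ε) (tMinus Δ r ε δ) := fun _ _ => rfl
  have hwPlus : ∀ r ε, wPlus lam Δ r ε δ =
      frozenProfile lam Δ r ((1 - δ / 2) * ε) (tPlus Δ r ε δ) := fun _ _ => rfl
  obtain ⟨c₀, hc₀, hmono⟩ := hl.exists_monotoneOn_frozenProfile (Δ := Δ)
  refine ⟨fun ε hε _ r hr => ?_, 2 / 3 * c₀, by positivity, fun ε hε hεc₀ r hr => ?_⟩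
  · rw [hwMinus, hwPlus]
    exact ⟨hl.frozenProfile_zero (hr.tMinus_nonneg hε hδ1.le),
      hl.frozenProfile_zero (hr.tPlus_nonneg hε hδ0.le)⟩
  · rw [hwMinus, hwPlus]
    exact ⟨hmono r hr _ _ (by positivity) (by nlinarith) (hr.tMinus_nonneg hε hδ1.le)
        (hr.mul_tMinus_le_one hε hδ0.le),
      hmono r hr _ _ (by nlinarith) (by nlinarith) (hr.tPlus_nonneg hε hδ0.le)
        (hr.mul_tPlus_le_one hε hδ0.le hδ1.le)⟩

/-- Properties of the approximations of the eigenfunction: `w^-_{p,δ}(0) = w^+_{p,δ}(0) = 0`,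
and for small `ε` both are monotone increasing on `[0,∞)`. -/
theorem w_approx_properties (Δ : ℕ) (hΔ : 3 ≤ Δ) (lam : ℝ → ℝ)
    (hdiff : Differentiable ℝ lam) (h0 : lam 0 = 0)
    (hode : ∀ t : ℝ, 0 ≤ t → deriv lam t = Real.exp (-lam t) * (1 + lam t))
    (δ : ℝ) (hδ0 : 0 < δ) (hδ1 : δ < 1) :
    (∀ ε : ℝ, 0 < ε → ε ≤ 1 → ∀ r : ℕ → ℝ, memR Δ r →
      wMinus lam Δ r ε δ 0 = 0 ∧ wPlus lam Δ r ε δ 0 = 0) ∧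
    (∃ ε₀ : ℝ, 0 < ε₀ ∧ ∀ ε : ℝ, 0 < ε → ε < ε₀ → ∀ r : ℕ → ℝ, memR Δ r →
      MonotoneOn (wMinus lam Δ r ε δ) (Set.Ici 0) ∧
      MonotoneOn (wPlus lam Δ r ε δ) (Set.Ici 0)) :=
  w_approx_properties_general Δ lam hdiff h0 hode δ hδ0 hδ1
end
end
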